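/- Let σ* : ℂ[λ_1,…,λ_r] → ℂ[λ_1,…,λ_r,μ_1,…,μ_r] be the ℂ-algebra homomorphism determined by λ_j ↦ λ_j + μ_j (pullback along the addition of the space of internal parameters). Then for every integer k ≥ 0 and every f ∈ ℂ[λ_1,…,λ_r], one has (D_k^λ + D_k^μ)(σ*f) = σ*(D_k f), where D_k^λ := ∑_{j=1}^{r−k} j·λ_{j+k}·∂/∂λ_j and D_k^μ := ∑_{j=1}^{r−k} j·μ_{j+k}·∂/∂μ_j are derivations of ℂ[λ_1,…,λ_r,μ_1,…,μ_r]. -/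
import Mathlib


/-!
STATEMENT 1.
Fix r ≥ 1.  On ℂ[λ_1,…,λ_r] (= `MvPolynomial (Fin r) ℂ`, variable `i : Fin r`
is λ_{i+1}) define D_k := ∑_{j=1}^{r−k} j·λ_{j+k}·∂/∂λ_j.  Let
σ* : ℂ[λ_1,…,λ_r] → ℂ[λ_1,…,λ_r,μ_1,…,μ_r] be the ℂ-algebra homomorphism
determined by λ_j ↦ λ_j + μ_j.  Then for every k ≥ 0 and every f,
  (D_k^λ + D_k^μ)(σ*f) = σ*(D_k f),
where D_k^λ, D_k^μ are the corresponding derivations of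
ℂ[λ_1,…,λ_r,μ_1,…,μ_r] (λ-variables are indexed by `Sum.inl`, μ-variables by
`Sum.inr`).
-/

noncomputable section

/-- `D_k = ∑_{j=1}^{r−k} j λ_{j+k} ∂/∂λ_j` on `ℂ[λ_1,…,λ_r]`. -/
def D (r k : ℕ) : Module.End ℂ (MvPolynomial (Fin r) ℂ) :=
  ∑ j : Fin r,
    if h : (j : ℕ) + 1 + k ≤ r then
      (((j : ℕ) + 1 : ℕ) : ℂ) •
        ((LinearMap.mulLeft ℂ (MvPolynomial.X (⟨(j : ℕ) + k, by omega⟩ : Fin r))).comp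
          (MvPolynomial.pderiv j).toLinearMap)
    else 0

/-- `D_k^λ = ∑_{j=1}^{r−k} j λ_{j+k} ∂/∂λ_j` on `ℂ[λ_1,…,λ_r,μ_1,…,μ_r]`. -/
def Dlam (r k : ℕ) : Module.End ℂ (MvPolynomial (Fin r ⊕ Fin r) ℂ) :=
  ∑ j : Fin r,
    if h : (j : ℕ) + 1 + k ≤ r then
      (((j : ℕ) + 1 : ℕ) : ℂ) •
        ((LinearMap.mulLeft ℂ
            (MvPolynomial.X (Sum.inl (⟨(j : ℕ) + k, by omega⟩ : Fin r)))).comp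
          (MvPolynomial.pderiv (Sum.inl j)).toLinearMap)
    else 0

/-- `D_k^μ = ∑_{j=1}^{r−k} j μ_{j+k} ∂/∂μ_j` on `ℂ[λ_1,…,λ_r,μ_1,…,μ_r]`. -/
def Dmu (r k : ℕ) : Module.End ℂ (MvPolynomial (Fin r ⊕ Fin r) ℂ) :=
  ∑ j : Fin r,
    if h : (j : ℕ) + 1 + k ≤ r then
      (((j : ℕ) + 1 : ℕ) : ℂ) •
        ((LinearMap.mulLeft ℂ
            (MvPolynomial.X (Sum.inr (⟨(j : ℕ) + k, by omega⟩ : Fin r)))).comp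
          (MvPolynomial.pderiv (Sum.inr j)).toLinearMap)
    else 0

/-- The pullback `σ*` along the addition of the internal parameter space:
`λ_j ↦ λ_j + μ_j`. -/
def sigmaStar (r : ℕ) : MvPolynomial (Fin r) ℂ →ₐ[ℂ] MvPolynomial (Fin r ⊕ Fin r) ℂ :=
  MvPolynomial.aeval fun j : Fin r =>
    MvPolynomial.X (Sum.inl j) + MvPolynomial.X (Sum.inr j)


open MvPolynomial

lemma D_mul (r k : ℕ) (p q : MvPolynomial (Fin r) ℂ) :
    D r k (p * q) = p * D r k q + q * D r k p := by
  unfold D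
  simp only [LinearMap.sum_apply, Finset.mul_sum, ← Finset.sum_add_distrib]
  refine Finset.sum_congr rfl fun j _ => ?_
  split_ifs with h
  · simp only [LinearMap.smul_apply, LinearMap.comp_apply, Derivation.coeFn_coe,
      LinearMap.mulLeft_apply, pderiv_mul, smul_eq_C_mul]
    ring
  · simp

lemma Dlam_mul (r k : ℕ) (p q : MvPolynomial (Fin r ⊕ Fin r) ℂ) :
    Dlam r k (p * q) = p * Dlam r k q + q * Dlam r k p := by
  unfold Dlam
  simp only [LinearMap.sum_apply, Finset.mul_sum, ← Finset.sum_add_distrib]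
  refine Finset.sum_congr rfl fun j _ => ?_
  split_ifs with h
  · simp only [LinearMap.smul_apply, LinearMap.comp_apply, Derivation.coeFn_coe,
      LinearMap.mulLeft_apply, pderiv_mul, smul_eq_C_mul]
    ring
  · simp

lemma Dmu_mul (r k : ℕ) (p q : MvPolynomial (Fin r ⊕ Fin r) ℂ) :
    Dmu r k (p * q) = p * Dmu r k q + q * Dmu r k p := by
  unfold Dmu
  simp only [LinearMap.sum_apply, Finset.mul_sum, ← Finset.sum_add_distrib]
  refine Finset.sum_congr rfl fun j _ => ?_
  split_ifs with h
  · simp only [LinearMap.smul_apply, LinearMap.comp_apply, Derivation.coeFn_coe,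
      LinearMap.mulLeft_apply, pderiv_mul, smul_eq_C_mul]
    ring
  · simp

lemma D_C (r k : ℕ) (c : ℂ) : D r k (C c) = 0 := by
  unfold D
  rw [LinearMap.sum_apply]
  refine Finset.sum_eq_zero fun j _ => ?_
  split_ifs with h <;> simp

lemma Dlam_C (r k : ℕ) (c : ℂ) : Dlam r k (C c) = 0 := by
  unfold Dlam
  rw [LinearMap.sum_apply]
  refine Finset.sum_eq_zero fun j _ => ?_
  split_ifs with h <;> simp

lemma Dmu_C (r k : ℕ) (c : ℂ) : Dmu r k (C c) = 0 := by
  unfold Dmu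
  rw [LinearMap.sum_apply]
  refine Finset.sum_eq_zero fun j _ => ?_
  split_ifs with h <;> simp

lemma D_X (r k : ℕ) (i : Fin r) :
    D r k (X i) =
      if h : (i : ℕ) + 1 + k ≤ r then
        (((i : ℕ) + 1 : ℕ) : ℂ) • X (⟨(i : ℕ) + k, by omega⟩ : Fin r)
      else 0 := by
  unfold D
  rw [LinearMap.sum_apply, Finset.sum_eq_single i]
  · split_ifs with h <;> simp
  · intro j _ hj
    split_ifs with h <;> simp [pderiv_X, Pi.single_apply, hj]
  · simp

lemma Dlam_X_inl (r k : ℕ) (i : Fin r) :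
    Dlam r k (X (Sum.inl i)) =
      if h : (i : ℕ) + 1 + k ≤ r then
        (((i : ℕ) + 1 : ℕ) : ℂ) • X (Sum.inl (⟨(i : ℕ) + k, by omega⟩ : Fin r))
      else 0 := by
  unfold Dlam
  rw [LinearMap.sum_apply, Finset.sum_eq_single i]
  · split_ifs with h <;> simp
  · intro j _ hj
    split_ifs with h <;> simp [pderiv_X, Pi.single_apply, hj]
  · simp

lemma Dmu_X_inr (r k : ℕ) (i : Fin r) :
    Dmu r k (X (Sum.inr i)) =
      if h : (i : ℕ) + 1 + k ≤ r then
        (((i : ℕ) + 1 : ℕ) : ℂ) • X (Sum.inr (⟨(i : ℕ) + k, by omega⟩ : Fin r))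
      else 0 := by
  unfold Dmu
  rw [LinearMap.sum_apply, Finset.sum_eq_single i]
  · split_ifs with h <;> simp
  · intro j _ hj
    split_ifs with h <;> simp [pderiv_X, Pi.single_apply, hj]
  · simp

lemma Dlam_X_inr (r k : ℕ) (i : Fin r) : Dlam r k (X (Sum.inr i)) = 0 := by
  unfold Dlam
  rw [LinearMap.sum_apply]
  refine Finset.sum_eq_zero fun j _ => ?_
  split_ifs with h <;> simp [pderiv_X, Pi.single_apply]

lemma Dmu_X_inl (r k : ℕ) (i : Fin r) : Dmu r k (X (Sum.inl i)) = 0 := by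
  unfold Dmu
  rw [LinearMap.sum_apply]
  refine Finset.sum_eq_zero fun j _ => ?_
  split_ifs with h <;> simp [pderiv_X, Pi.single_apply]

lemma key_X (r k : ℕ) (i : Fin r) :
    (Dlam r k + Dmu r k) (sigmaStar r (X i)) = sigmaStar r (D r k (X i)) := by
  have hs : sigmaStar r (X i) = X (Sum.inl i) + X (Sum.inr i) := by
    simp [sigmaStar]
  rw [hs, LinearMap.add_apply, map_add, map_add, Dlam_X_inl, Dmu_X_inr,
    Dlam_X_inr, Dmu_X_inl, D_X]
  split_ifs with h
  · simp [sigmaStar, smul_add]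
  · simp

theorem statement1 (r : ℕ) (hr : 1 ≤ r) (k : ℕ) (f : MvPolynomial (Fin r) ℂ) :
    (Dlam r k + Dmu r k) (sigmaStar r f) = sigmaStar r (D r k f) := by
  induction f using MvPolynomial.induction_on with
  | C c =>
      have : sigmaStar r (C c) = C c := by simp [sigmaStar, algebraMap_eq]
      rw [this, D_C, map_zero, LinearMap.add_apply, Dlam_C, Dmu_C, add_zero]
  | add p q hp hq =>
      rw [map_add, map_add, map_add, map_add, hp, hq]
  | mul_X p i hp =>
      have hLmul : ∀ a b : MvPolynomial (Fin r ⊕ Fin r) ℂ,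
          (Dlam r k + Dmu r k) (a * b)
            = a * (Dlam r k + Dmu r k) b + b * (Dlam r k + Dmu r k) a := by
        intro a b
        simp only [LinearMap.add_apply, Dlam_mul, Dmu_mul]
        ring
      rw [map_mul, hLmul, hp, key_X, D_mul, map_add, map_mul, map_mul]

end
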